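/- arXiv:1612.03303 — 4 statements merged into one kernel-verified Lean document; each statement's English description precedes it below -/
import Mathlib

section
/- The function f(x) = (T sinh(x/T) - x)/(2T sinh²(x/(2T))), which is the derivative of x ↦ x/tanh(x/(2T)), satisfies 0 ≤ f(x) ≤ 1 for all x ≥ 0 and T > 0. -/
/-- `f(x) = (T sinh(x/T) - x)/(2T sinh²(x/(2T)))`, the derivative of
`x ↦ x/tanh(x/(2T))`, extended continuously by `f(0) = 0`. -/
noncomputable def fDeriv (T x : ℝ) : ℝ :=
  if x = 0 then 0
  else (T * Real.sinh (x / T) - x) / (2 * T * Real.sinh (x / (2 * T)) ^ 2)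

lemma key_upper (u : ℝ) (hu : 0 < u) :
    Real.sinh u * Real.cosh u - Real.sinh u ^ 2 ≤ u := by
  have h1 : Real.cosh u - Real.sinh u = Real.exp (-u) := Real.cosh_sub_sinh u
  have h2 : Real.sinh u = (Real.exp u - Real.exp (-u)) / 2 := Real.sinh_eq u
  have h3 : Real.exp (-u) * Real.exp u = 1 := by
    rw [← Real.exp_add]; simp
  have h4 : Real.exp (-u) * Real.exp (-u) = Real.exp (-(2*u)) := by
    rw [← Real.exp_add]; ring_nf
  have h5 : -(2*u) + 1 ≤ Real.exp (-(2*u)) := Real.add_one_le_exp _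
  nlinarith [Real.exp_pos (-u), Real.exp_pos u]

/-- For `T > 0` and `x ≥ 0`, one has `0 ≤ f(x) ≤ 1`. -/
theorem fDeriv_bounds (T : ℝ) (hT : 0 < T) (x : ℝ) (hx : 0 ≤ x) :
    0 ≤ fDeriv T x ∧ fDeriv T x ≤ 1 := by
  unfold fDeriv
  rcases eq_or_lt_of_le hx with h | h
  · simp [← h]
  rw [if_neg (ne_of_gt h)]
  set u := x / (2 * T) with hu_def
  have hu : 0 < u := div_pos h (by positivity)
  have hsu : 0 < Real.sinh u := Real.sinh_pos_iff.mpr hu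
  have hcu : 1 ≤ Real.cosh u := Real.one_le_cosh u
  have hxu : x = 2 * T * u := by
    rw [hu_def]; field_simp
  have hxt : x / T = 2 * u := by
    rw [hu_def]; field_simp
  have hsinh2 : Real.sinh (x / T) = 2 * Real.sinh u * Real.cosh u := by
    rw [hxt, Real.sinh_two_mul]
  have husu : u ≤ Real.sinh u := Real.self_le_sinh_iff.mpr hu.le
  have hD : 0 < 2 * T * Real.sinh u ^ 2 := by positivity
  constructor
  · apply div_nonneg _ (le_of_lt hD)
    rw [hsinh2, hxu]
    have h1 : u ≤ Real.sinh u * Real.cosh u :=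
      le_trans husu (le_mul_of_one_le_right hsu.le hcu)
    nlinarith [mul_nonneg hT.le (sub_nonneg.mpr h1)]
  · rw [div_le_one hD, hsinh2, hxu]
    have h2 := key_upper u hu
    nlinarith [mul_nonneg hT.le (sub_nonneg.mpr h2)]
end

section
/- The function g(y) = 1/(y tanh(y)) - 1/sinh²(y) is decreasing on (0, ∞). -/
/-- `g(y) = 1/(y tanh y) - 1/sinh² y`. -/
noncomputable def gfun (y : ℝ) : ℝ :=
  1 / (y * Real.tanh y) - 1 / Real.sinh y ^ 2

/-!
With `s = sinh y` and `c = cosh y`, one computes `g'(y) = (2y²c - (s²c + ys)) / (y²s³)`, so it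
suffices that `2y²c ≤ s²c + ys` for `y ≥ 0`. This follows from the two Taylor-type bounds
`s ≥ y + y³/6` and `s ≥ (y - y³/3) c`, which together give `s²c + ys ≥ (2y² + y⁶/36) c`.
-/

open Real Set

lemma monotoneOn_Ici_of_hasDerivAt_nonneg {f f' : ℝ → ℝ} {a : ℝ}
    (hf : ∀ x, HasDerivAt f (f' x) x) (hf' : ∀ x, a < x → 0 ≤ f' x) :
    MonotoneOn f (Ici a) :=
  monotoneOn_of_hasDerivWithinAt_nonneg (convex_Ici a)
    (fun x _ ↦ (hf x).continuousAt.continuousWithinAt) (fun x _ ↦ (hf x).hasDerivWithinAt)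
    (fun x hx ↦ hf' x (by simpa using hx))

namespace Real

lemma sinh_le_mul_cosh {y : ℝ} (hy : 0 ≤ y) : sinh y ≤ y * cosh y := by
  have hd (x : ℝ) : HasDerivAt (fun x ↦ x * cosh x - sinh x) (x * sinh x) x := by
    refine (((hasDerivAt_id' x).mul (hasDerivAt_cosh x)).sub (hasDerivAt_sinh x)).congr_deriv ?_
    ring
  have := monotoneOn_Ici_of_hasDerivAt_nonneg hd
    (fun x hx ↦ mul_nonneg hx.le (sinh_nonneg_iff.2 hx.le)) self_mem_Ici hy hy
  simp only [zero_mul, sinh_zero, sub_zero] at this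
  linarith

lemma add_pow_three_div_six_le_sinh {y : ℝ} (hy : 0 ≤ y) : y + y ^ 3 / 6 ≤ sinh y := by
  have := sum_le_hasSum (Finset.range 2) (fun n _ ↦ by positivity) (hasSum_sinh y)
  norm_num [Finset.sum_range_succ, Nat.factorial] at this
  exact this

lemma sub_pow_three_div_three_mul_cosh_le_sinh {y : ℝ} (hy : 0 ≤ y) :
    (y - y ^ 3 / 3) * cosh y ≤ sinh y := by
  have hd (x : ℝ) : HasDerivAt (fun x ↦ sinh x - (x - x ^ 3 / 3) * cosh x)
      (x ^ 2 * cosh x - (x - x ^ 3 / 3) * sinh x) x := by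
    refine ((hasDerivAt_sinh x).sub (((hasDerivAt_id' x).sub
      ((hasDerivAt_pow 3 x).div_const 3)).mul (hasDerivAt_cosh x))).congr_deriv ?_
    norm_num
    ring
  have hd_nonneg (x : ℝ) (hx : 0 < x) : 0 ≤ x ^ 2 * cosh x - (x - x ^ 3 / 3) * sinh x := by
    have hsc := sinh_le_mul_cosh hx.le
    have hs := sinh_nonneg_iff.2 hx.le
    nlinarith [mul_le_mul_of_nonneg_left hsc hx.le, pow_pos hx 3]
  have := monotoneOn_Ici_of_hasDerivAt_nonneg hd hd_nonneg self_mem_Ici hy hy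
  simp only [sinh_zero, cosh_zero] at this
  linarith

lemma two_mul_sq_mul_cosh_le {y : ℝ} (hy : 0 ≤ y) :
    2 * y ^ 2 * cosh y ≤ sinh y ^ 2 * cosh y + y * sinh y := by
  have hc := cosh_pos y
  have hs := add_pow_three_div_six_le_sinh hy
  calc 2 * y ^ 2 * cosh y
      ≤ (y + y ^ 3 / 6) ^ 2 * cosh y + y * ((y - y ^ 3 / 3) * cosh y) := by
        nlinarith [mul_nonneg (pow_nonneg hy 6) hc.le]
    _ ≤ sinh y ^ 2 * cosh y + y * sinh y := by
        gcongr
        exact sub_pow_three_div_three_mul_cosh_le_sinh hy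

end Real

lemma gfun_eq : gfun = fun y ↦ cosh y / (y * sinh y) - 1 / sinh y ^ 2 := by
  ext y
  rw [gfun, tanh_eq_sinh_div_cosh, mul_div_assoc', one_div_div]

lemma hasDerivAt_gfun {y : ℝ} (hy : 0 < y) :
    HasDerivAt gfun
      ((2 * y ^ 2 * cosh y - (sinh y ^ 2 * cosh y + y * sinh y)) / (y ^ 2 * sinh y ^ 3)) y := by
  have hs : 0 < sinh y := sinh_pos_iff.2 hy
  rw [gfun_eq]
  refine (((hasDerivAt_cosh y).fun_div ((hasDerivAt_id' y).fun_mul (hasDerivAt_sinh y))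
    (by positivity)).fun_sub ((hasDerivAt_const y 1).fun_div ((hasDerivAt_sinh y).fun_pow 2)
    (by positivity))).congr_deriv ?_
  field_simp
  linear_combination -(y * sinh y ^ 2) * cosh_sq_sub_sinh_sq y

/-- The function `g` is decreasing on `(0, ∞)`. -/
theorem gfun_antitone : AntitoneOn gfun (Set.Ioi (0 : ℝ)) := by
  refine antitoneOn_of_hasDerivWithinAt_nonpos (convex_Ioi 0) (f' := fun y ↦
      (2 * y ^ 2 * cosh y - (sinh y ^ 2 * cosh y + y * sinh y)) / (y ^ 2 * sinh y ^ 3))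
    (fun y hy ↦ (hasDerivAt_gfun hy).continuousAt.continuousWithinAt) (fun y hy ↦ ?_)
    (fun y hy ↦ ?_) <;> rw [interior_Ioi] at hy
  · exact (hasDerivAt_gfun hy).hasDerivWithinAt
  · have hs : 0 < sinh y := sinh_pos_iff.2 hy
    exact div_nonpos_of_nonpos_of_nonneg (sub_nonpos.2 (two_mul_sq_mul_cosh_le hy.le))
      (by positivity)
end

section
/- The function g(y) = 1/(y tanh(y)) - 1/sinh²(y) satisfies g(y) ≥ (2/3)·(1 + y)⁻¹ for all y > 0. -/
/-- Taylor lower bound `1 + x + x²/2 + x³/6 ≤ eˣ` for `x ≥ 0`. -/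
lemma cubic_le_exp {x : ℝ} (hx : 0 ≤ x) :
    1 + x + x ^ 2 / 2 + x ^ 3 / 6 ≤ Real.exp x := by
  have h := Real.sum_le_exp_of_nonneg hx 4
  simp [Finset.sum_range_succ, Nat.factorial] at h
  linarith

/-- `g(y) ≥ (2/3)·(1 + y)⁻¹` for all `y > 0`. -/
theorem gfun_lower_bound (y : ℝ) (hy : 0 < y) :
    2 / 3 * (1 + y)⁻¹ ≤ gfun y := by
  set a := Real.exp y with ha_def
  have ha : 0 < a := Real.exp_pos y
  have hE : 1 + 2*y + 2*y^2 + (4/3)*y^3 ≤ a ^ 2 := by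
    have h := cubic_le_exp (by linarith : (0:ℝ) ≤ 2*y)
    have h2 : Real.exp (2*y) = a ^ 2 := by
      rw [ha_def, ← Real.exp_nat_mul]; ring_nf
    nlinarith [h, h2]
  -- key polynomial inequality
  have key : 2*y*(a^2-1)^2 ≤ 3*(1+y)*((a^2)^2 - 1 - 4*y*a^2) := by
    have h1 : 0 ≤ (3+y)*(a^2 + (1 + 2*y + 2*y^2 + (4/3)*y^3)) - (12*y^2+8*y) := by
      nlinarith [mul_nonneg (sub_nonneg.2 hE) (show (0:ℝ) ≤ 3+y by linarith)]
    have h2 : 0 ≤ (a^2 - (1 + 2*y + 2*y^2 + (4/3)*y^3)) *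
        ((3+y)*(a^2 + (1 + 2*y + 2*y^2 + (4/3)*y^3)) - (12*y^2+8*y)) :=
      mul_nonneg (sub_nonneg.2 hE) h1
    nlinarith [h2, pow_nonneg hy.le 4, pow_nonneg hy.le 5, pow_nonneg hy.le 6,
      pow_nonneg hy.le 7]
  have hs : 0 < Real.sinh y := Real.sinh_pos_iff.2 hy
  have hc : 0 < Real.cosh y := Real.cosh_pos y
  have e1 : Real.sinh y ^ 2 = (a^2-1)^2/(4*a^2) := by
    rw [Real.sinh_eq, Real.exp_neg, ← ha_def]
    field_simp
    ring
  have e2 : Real.sinh y * Real.cosh y = ((a^2)^2-1)/(4*a^2) := by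
    rw [Real.sinh_eq, Real.cosh_eq, Real.exp_neg, ← ha_def]
    field_simp
    ring
  have key2 : 2*y*Real.sinh y^2 ≤ 3*(1+y)*(Real.sinh y * Real.cosh y - y) := by
    rw [e1, e2]
    rw [← sub_nonneg]
    have heq : 3*(1+y)*(((a^2)^2-1)/(4*a^2) - y) - 2*y*((a^2-1)^2/(4*a^2))
        = (3*(1+y)*((a^2)^2 - 1 - 4*y*a^2) - 2*y*(a^2-1)^2)/(4*a^2) := by
      field_simp
    rw [heq]
    apply div_nonneg (by linarith) (by positivity)
  have hgf : gfun y - 2/3*(1+y)⁻¹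
      = (3*(1+y)*(Real.sinh y * Real.cosh y - y) - 2*y*Real.sinh y^2)
        / (3*(1+y)*(y*Real.sinh y^2)) := by
    rw [gfun, Real.tanh_eq_sinh_div_cosh]
    field_simp
  have h0 : 0 ≤ gfun y - 2/3*(1+y)⁻¹ := by
    rw [hgf]
    apply div_nonneg (by linarith)
    positivity
  linarith
end

section
/- Consequence of the rearrangement inequality: under the assumptions of the previous statement (and using rotation invariance of ω), at least one of the two integrals ∫_Ω g(Δ(p)) f(Δ(Rp)) dω(p) or ∫_Ω g(Δ(Rp)) f(Δ(p)) dω(p) is strictly smaller than ∫_Ω g(Δ(p)) f(Δ(p)) dω(p). -/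
open MeasureTheory

/-- Consequence of the rearrangement inequality: with `ω` a rotation-invariant
measure (the uniform measure on the sphere), `R` a rotation preserving `ω`,
`f, g : [0,∞) → ℝ` strictly increasing and `Δ ≥ 0` measurable with `Δ∘R ≠ Δ` on a
set of positive measure, at least one of `∫ g(Δ(p)) f(Δ(Rp)) dω` and
`∫ g(Δ(Rp)) f(Δ(p)) dω` is strictly smaller than `∫ g(Δ(p)) f(Δ(p)) dω`. -/
theorem rearrangement_consequence (d : ℕ)
    (ω : Measure (EuclideanSpace ℝ (Fin d)))
    (f g : ℝ → ℝ)
    (hf : StrictMonoOn f (Set.Ici (0 : ℝ))) (hg : StrictMonoOn g (Set.Ici (0 : ℝ)))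
    (Δ : EuclideanSpace ℝ (Fin d) → ℝ) (hΔ : ∀ p, 0 ≤ Δ p)
    (hΔmeas : Measurable Δ)
    (R : EuclideanSpace ℝ (Fin d) ≃ₗᵢ[ℝ] EuclideanSpace ℝ (Fin d))
    (hR : MeasurePreserving R ω ω)
    (hint1 : Integrable (fun p => g (Δ p) * f (Δ (R p))) ω)
    (hint2 : Integrable (fun p => g (Δ (R p)) * f (Δ p)) ω)
    (hint3 : Integrable (fun p => g (Δ p) * f (Δ p)) ω)
    (hdiff : 0 < ω {p | Δ (R p) ≠ Δ p}) :
    (∫ p, g (Δ p) * f (Δ (R p)) ∂ω) < (∫ p, g (Δ p) * f (Δ p) ∂ω) ∨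
      (∫ p, g (Δ (R p)) * f (Δ p) ∂ω) < (∫ p, g (Δ p) * f (Δ p) ∂ω) := by
  set h : EuclideanSpace ℝ (Fin d) → ℝ :=
    fun p => (g (Δ p) - g (Δ (R p))) * (f (Δ p) - f (Δ (R p))) with hh
  have hnonneg : ∀ p, 0 ≤ h p := by
    intro p
    simp only [hh]
    rcases lt_trichotomy (Δ p) (Δ (R p)) with hlt | heq | hgt
    · have h1 := hg (hΔ p) (hΔ (R p)) hlt
      have h2 := hf (hΔ p) (hΔ (R p)) hlt
      nlinarith [mul_pos (sub_pos.2 h1) (sub_pos.2 h2)]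
    · simp [hh, heq]
    · have h1 := hg (hΔ (R p)) (hΔ p) hgt
      have h2 := hf (hΔ (R p)) (hΔ p) hgt
      exact mul_nonneg (by linarith) (by linarith)
  have hint4 : Integrable (fun p => g (Δ (R p)) * f (Δ (R p))) ω :=
    (hR.integrable_comp_emb R.toHomeomorph.measurableEmbedding).mpr hint3
  have hinth : Integrable h ω := by
    have : h = fun p => (g (Δ p) * f (Δ p) + g (Δ (R p)) * f (Δ (R p)))
        - (g (Δ p) * f (Δ (R p)) + g (Δ (R p)) * f (Δ p)) := by
      funext p; simp [hh]; ring
    rw [this]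
    exact (hint3.add hint4).sub (hint1.add hint2)
  have hsupp : Function.support h = {p | Δ (R p) ≠ Δ p} := by
    ext p
    simp only [Function.support, Set.mem_setOf_eq, hh, mul_ne_zero_iff, sub_ne_zero]
    constructor
    · rintro ⟨h1, -⟩
      intro he
      exact h1 (by rw [he])
    · intro hne
      refine ⟨fun he => hne ?_, fun he => hne ?_⟩
      · exact (hg.injOn (hΔ (R p)) (hΔ p) he.symm)
      · exact (hf.injOn (hΔ (R p)) (hΔ p) he.symm)
  have hpos : 0 < ∫ p, h p ∂ω := by
    rw [integral_pos_iff_support_of_nonneg hnonneg hinth, hsupp]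
    exact hdiff
  have heq4 : ∫ p, g (Δ (R p)) * f (Δ (R p)) ∂ω = ∫ p, g (Δ p) * f (Δ p) ∂ω :=
    hR.integral_comp R.toHomeomorph.measurableEmbedding (fun p => g (Δ p) * f (Δ p))
  have hsplit : ∫ p, h p ∂ω =
      (∫ p, g (Δ p) * f (Δ p) ∂ω + ∫ p, g (Δ (R p)) * f (Δ (R p)) ∂ω)
      - (∫ p, g (Δ p) * f (Δ (R p)) ∂ω + ∫ p, g (Δ (R p)) * f (Δ p) ∂ω) := by
    have e : ∫ p, h p ∂ω = ∫ p, ((g (Δ p) * f (Δ p) + g (Δ (R p)) * f (Δ (R p)))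
        - (g (Δ p) * f (Δ (R p)) + g (Δ (R p)) * f (Δ p))) ∂ω := by
      congr 1; funext p; simp only [hh]; ring
    have h34 : Integrable (fun p => g (Δ p) * f (Δ p) + g (Δ (R p)) * f (Δ (R p))) ω :=
      hint3.add hint4
    have h12 : Integrable (fun p => g (Δ p) * f (Δ (R p)) + g (Δ (R p)) * f (Δ p)) ω :=
      hint1.add hint2
    rw [e, integral_sub h34 h12, integral_add hint3 hint4, integral_add hint1 hint2]
  rw [hsplit, heq4] at hpos
  by_contra hcon
  push_neg at hcon
  linarith [hcon.1, hcon.2]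
end
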